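/- Suppose (U'₁,U'₂,<') is the result of applying a case II coherent extended Nielsen transformation to a coherent extended word equation (U₁,U₂,<) whose cut graph G_{U₁,U₂,<} is acyclic. Then for every boundary (i,j) ∈ B' of (U'₁,U'₂), the fecundity satisfies f_{U'₁,U'₂,<'}(i,j) ≤ f_{U₁,U₂,<}(i,ν(i,j)). -/

import Mathlib

/-!
Write `x = U_{1,1}`, `y = U_{2,1}` and `T(x) = y x`. A new boundary either lies in `B'⁻`, where
`μ ∘ ν` is the identity and `<'` is `<` transported along `ν`, or it lies between the `y` and the
`x` of some `T(x)`, and `ν` sends it to the end of that `x`. So `ν` is injective on each of these two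
classes, and it carries cuts to cuts. The mirrors of `c'` in the class of `c'` go to mirrors of
`ν c'`; those in the other class go to mirrors of `(1,1)` (resp. `(2,1)`), whose total fecundity is
below `f(2,1)` (resp. `f(1,1)`) because `(1,1)` and `(2,1)` cut each other, and then `(2,1)`
(resp. `(1,1)`) is itself a mirror of `ν c'`. Hence the mirror sums of `f ∘ ν` at `c'` are bounded
by those of `f` at `ν c'`, and induction on `f'` gives `f' ≤ f ∘ ν`.
-/

open scoped Classical

namespace ExtWordEq

/-- The type of (candidate) boundary orders: relations on pairs (i,j). -/
abbrev BRel : Type := ℕ × ℕ → ℕ × ℕ → Prop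

variable {X : Type*}

/-- The `i`-th side of the word equation (`i = 1` gives `U₁`, anything else `U₂`). -/
def word (U₁ U₂ : List X) (i : ℕ) : List X := if i = 1 then U₁ else U₂

/-- The variable `U_{i,j}` (1-indexed), as an optional value. -/
def letter (U₁ U₂ : List X) (b : ℕ × ℕ) : Option X := (word U₁ U₂ b.1)[b.2 - 1]?

/-- `b` is a boundary of the word equation `(U₁, U₂)`. -/
def Boundary (U₁ U₂ : List X) (b : ℕ × ℕ) : Prop :=
  (b.1 = 1 ∨ b.1 = 2) ∧ 1 ≤ b.2 ∧ b.2 ≤ (word U₁ U₂ b.1).length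

/-- `b` is a boundary of `(U₁, U₂)` or one of the conventional boundaries `(1,0)`, `(2,0)`. -/
def EBoundary (U₁ U₂ : List X) (b : ℕ × ℕ) : Prop :=
  (b.1 = 1 ∨ b.1 = 2) ∧ b.2 ≤ (word U₁ U₂ b.1).length

/-- Incomparability `a ≈ b` for a strict order. -/
def Incomp (lt : BRel) (a b : ℕ × ℕ) : Prop := ¬ lt a b ∧ ¬ lt b a

/-- `lt` is a boundary order for the word equation `(U₁, U₂)`:
a strict weak order on the boundaries (together with the conventional boundaries
`(1,0) ≈ (2,0)`), extending `(i,j) < (i,j+1)` and with `(1,m) ≈ (2,n)`. -/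
structure BoundaryOrder (U₁ U₂ : List X) (lt : BRel) : Prop where
  irrefl : ∀ a, EBoundary U₁ U₂ a → ¬ lt a a
  trans : ∀ a b c, EBoundary U₁ U₂ a → EBoundary U₁ U₂ b → EBoundary U₁ U₂ c →
    lt a b → lt b c → lt a c
  incomp_trans : ∀ a b c, EBoundary U₁ U₂ a → EBoundary U₁ U₂ b → EBoundary U₁ U₂ c →
    Incomp lt a b → Incomp lt b c → Incomp lt a c
  succ : ∀ i j : ℕ, EBoundary U₁ U₂ (i, j + 1) → lt (i, j) (i, j + 1)
  top : Incomp lt (1, U₁.length) (2, U₂.length)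
  bot : Incomp lt (1, 0) (2, 0)

/-- `L(U_{i,1} U_{i,2} ⋯ U_{i,j})` where `L` is the additive extension of a length
assignment on variables. -/
def prefixLen (U₁ U₂ : List X) (L : X → ℕ) (b : ℕ × ℕ) : ℕ :=
  (((word U₁ U₂ b.1).take b.2).map L).sum

/-- The extended word equation `(U₁, U₂, lt)` is coherent. -/
def Coherent (U₁ U₂ : List X) (lt : BRel) : Prop :=
  ∃ L : X → ℕ, (∀ x, 0 < L x) ∧
    ∀ a b, Boundary U₁ U₂ a → Boundary U₁ U₂ b →
      (lt a b ↔ prefixLen U₁ U₂ L a < prefixLen U₁ U₂ L b)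

/-- The boundary `a` cuts the boundary `b`. -/
def Cuts (U₁ U₂ : List X) (lt : BRel) (a b : ℕ × ℕ) : Prop :=
  Boundary U₁ U₂ a ∧ Boundary U₁ U₂ b ∧ a ≠ b ∧
    lt (a.1, a.2 - 1) b ∧ lt (b.1, b.2 - 1) a

/-- The boundary `a` mirrors the boundary `b`. -/
def Mirrors (U₁ U₂ : List X) (lt : BRel) (a b : ℕ × ℕ) : Prop :=
  Boundary U₁ U₂ a ∧ Boundary U₁ U₂ b ∧ letter U₁ U₂ a = letter U₁ U₂ b ∧
    (¬ Incomp lt a b ∨ ¬ Incomp lt (a.1, a.2 - 1) (b.1, b.2 - 1))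

/-- Edge relation of the cut graph `G_{U₁,U₂,<}`. -/
def CutEdge (U₁ U₂ : List X) (lt : BRel) (a b : ℕ × ℕ) : Prop :=
  ∃ c, Cuts U₁ U₂ lt a c ∧ Mirrors U₁ U₂ lt c b

/-- `w 0, w 1, …, w n` is a cycle (of length `n ≥ 1`) in the cut graph. -/
def IsCycle (U₁ U₂ : List X) (lt : BRel) (n : ℕ) (w : ℕ → ℕ × ℕ) : Prop :=
  0 < n ∧ w n = w 0 ∧ ∀ k < n, CutEdge U₁ U₂ lt (w k) (w (k + 1))

/-- The cut graph `G_{U₁,U₂,<}` is acyclic. -/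
def Acyclic (U₁ U₂ : List X) (lt : BRel) : Prop :=
  ¬ ∃ n w, IsCycle U₁ U₂ lt n w

variable [DecidableEq X]

/-- Case I extended Nielsen transformation (here `x = U_{1,1}`, `y = U_{2,1}`,
and `T(y) = x`). -/
def NielsenI (U₁ U₂ : List X) (lt : BRel) (U₁' U₂' : List X) (lt' : BRel) : Prop :=
  ∃ x y : X, U₁.head? = some x ∧ U₂.head? = some y ∧
    Incomp lt (1, 1) (2, 1) ∧
    U₁' = (U₁.map fun z => if z = y then x else z).tail ∧
    U₂' = (U₂.map fun z => if z = y then x else z).tail ∧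
    BoundaryOrder U₁' U₂' lt' ∧
    ∀ a b : ℕ × ℕ, EBoundary U₁' U₂' a → EBoundary U₁' U₂' b →
      (lt' a b ↔ lt (a.1, a.2 + 1) (b.1, b.2 + 1))

/-- The substitution `T(x) = y x` (identity on other variables), applied to a word. -/
def expand (x y : X) (l : List X) : List X :=
  l.flatMap fun z => if z = x then [y, x] else [z]

/-- The map `μ(i,j) = j + #{j' ≤ j : U_{i,j'} = x} − 1` (as a map on boundaries),
where `x = U_{1,1}`. -/
def mu (U₁ U₂ : List X) (x : X) (b : ℕ × ℕ) : ℕ × ℕ :=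
  (b.1, b.2 + ((word U₁ U₂ b.1).take b.2).count x - 1)

/-- The map `ν(i,j) = j − #{j' ≤ j : U'_{i,j'} = x} + 1` (as a map on boundaries),
where `x = U_{1,1}`. -/
def nu (U₁' U₂' : List X) (x : X) (b : ℕ × ℕ) : ℕ × ℕ :=
  (b.1, b.2 - ((word U₁' U₂' b.1).take b.2).count x + 1)

/-- Membership in `B⁻ = B ∖ {(2,1)}`. -/
def Bminus (U₁ U₂ : List X) (b : ℕ × ℕ) : Prop := Boundary U₁ U₂ b ∧ b ≠ (2, 1)

/-- Membership in `B'⁻ = {(i, μ(i,j)) : (i,j) ∈ B⁻}` (`x = U_{1,1}`). -/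
def Bpminus (U₁ U₂ : List X) (x : X) (b' : ℕ × ℕ) : Prop :=
  ∃ b, Bminus U₁ U₂ b ∧ mu U₁ U₂ x b = b'

/-- Case II extended Nielsen transformation, with the heads `x = U_{1,1}`,
`y = U_{2,1}` made explicit. -/
def NielsenIIxy (U₁ U₂ : List X) (lt : BRel) (U₁' U₂' : List X) (lt' : BRel)
    (x y : X) : Prop :=
  U₁.head? = some x ∧ U₂.head? = some y ∧
  lt (2, 1) (1, 1) ∧
  U₁' = (expand x y U₁).tail ∧
  U₂' = (expand x y U₂).tail ∧
  BoundaryOrder U₁' U₂' lt' ∧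
  ∀ a b, Bpminus U₁ U₂ x a → Bpminus U₁ U₂ x b →
    (lt' a b ↔ lt (nu U₁' U₂' x a) (nu U₁' U₂' x b))

/-- Case II extended Nielsen transformation. -/
def NielsenII (U₁ U₂ : List X) (lt : BRel) (U₁' U₂' : List X) (lt' : BRel) : Prop :=
  ∃ x y : X, NielsenIIxy U₁ U₂ lt U₁' U₂' lt' x y

/-- The dual boundary order. -/
def dualRel (lt : BRel) : BRel := fun a b => lt (3 - a.1, a.2) (3 - b.1, b.2)

/-- Case III extended Nielsen transformation: case II applied to the dual,
then dualized back. -/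
def NielsenIII (U₁ U₂ : List X) (lt : BRel) (U₁' U₂' : List X) (lt' : BRel) : Prop :=
  NielsenII U₂ U₁ (dualRel lt) U₂' U₁' (dualRel lt')

/-- `(U₁', U₂', lt')` is an extended Nielsen transformation of the nontrivial coherent
extended word equation `(U₁, U₂, lt)`. -/
def ExtNielsen (U₁ U₂ : List X) (lt : BRel) (U₁' U₂' : List X) (lt' : BRel) : Prop :=
  U₁ ≠ [] ∧ U₂ ≠ [] ∧ BoundaryOrder U₁ U₂ lt ∧ Coherent U₁ U₂ lt ∧
    (NielsenI U₁ U₂ lt U₁' U₂' lt' ∨ NielsenII U₁ U₂ lt U₁' U₂' lt' ∨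
      NielsenIII U₁ U₂ lt U₁' U₂' lt')

/-- A coherent extended Nielsen transformation. -/
def CohNielsen (U₁ U₂ : List X) (lt : BRel) (U₁' U₂' : List X) (lt' : BRel) : Prop :=
  ExtNielsen U₁ U₂ lt U₁' U₂' lt' ∧ Coherent U₁' U₂' lt'

/-- `(U₁, U₂, lt)` is (strongly) terminating: there is no infinite sequence of coherent
extended Nielsen transformations starting from it. -/
def Terminating (U₁ U₂ : List X) (lt : BRel) : Prop :=
  ¬ ∃ f : ℕ → List X × List X × BRel,
    f 0 = (U₁, U₂, lt) ∧
    ∀ n, CohNielsen (f n).1 (f n).2.1 (f n).2.2 (f (n + 1)).1 (f (n + 1)).2.1 (f (n + 1)).2.2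


/-- The finite set of boundaries of `(U₁, U₂)`. -/
def boundaryFinset (U₁ U₂ : List X) : Finset (ℕ × ℕ) :=
  ((Finset.range U₁.length).image fun j => (1, j + 1)) ∪
    ((Finset.range U₂.length).image fun j => (2, j + 1))

/-- `f` is the fecundity function of `(U₁, U₂, lt)`: on every boundary `b`,
`f b = 1 + max over boundaries c cut by b of (sum over boundaries d mirrored by c of f d)`. -/
def IsFecundity (U₁ U₂ : List X) (lt : BRel) (f : ℕ × ℕ → ℕ) : Prop :=
  ∀ b ∈ boundaryFinset U₁ U₂,
    f b = 1 + ((boundaryFinset U₁ U₂).filter fun c => Cuts U₁ U₂ lt b c).sup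
      fun c => ((boundaryFinset U₁ U₂).filter fun d => Mirrors U₁ U₂ lt c d).sum f

end ExtWordEq

theorem Finset.sum_comp_le_of_injOn {α β M : Type*} [AddCommMonoid M] [PartialOrder M]
    [CanonicallyOrderedAdd M] {s : Finset α} {t : Finset β} {g : α → β} (f : β → M)
    (hg : Set.InjOn g s) (hst : Set.MapsTo g s t) :
    ∑ a ∈ s, f (g a) ≤ ∑ b ∈ t, f b := by
  rw [← Finset.sum_image hg]
  exact Finset.sum_le_sum_of_subset fun b hb => by
    obtain ⟨a, ha, rfl⟩ := Finset.mem_image.1 hb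
    exact hst ha

theorem Finset.sum_comp_le_of_injOn_filter {α β M : Type*} [AddCommMonoid M] [PartialOrder M]
    [CanonicallyOrderedAdd M] {s : Finset α} {t u : Finset β} {g : α → β} (f : β → M)
    (p : α → Prop) [DecidablePred p] [DecidableEq β] {b : β}
    (hp : Set.InjOn g (s.filter p)) (hpt : Set.MapsTo g (s.filter p) (t.erase b))
    (hnp : Set.InjOn g (s.filter (¬ p ·))) (hnpu : Set.MapsTo g (s.filter (¬ p ·)) u)
    (hb : (s.filter (¬ p ·)).Nonempty → b ∈ t) (hu : ∑ c ∈ u, f c ≤ f b) :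
    ∑ a ∈ s, f (g a) ≤ ∑ c ∈ t, f c := by
  have := CanonicallyOrderedAdd.toIsOrderedAddMonoid (α := M)
  rw [← Finset.sum_filter_add_sum_filter_not s p]
  have hP := Finset.sum_comp_le_of_injOn f hp hpt
  rcases (s.filter (¬ p ·)).eq_empty_or_nonempty with hempty | hne
  · rw [hempty, Finset.sum_empty, add_zero]
    exact hP.trans (Finset.sum_le_sum_of_subset (Finset.erase_subset b t))
  · rw [← Finset.add_sum_erase t f (hb hne), add_comm (f b)]
    exact add_le_add hP ((Finset.sum_comp_le_of_injOn f hnp hnpu).trans hu)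

namespace ExtWordEq

variable {X : Type*} {U₁ U₂ : List X} {lt : BRel} {L : X → ℕ}

theorem fecundity_le_comp_of_simulation {α β : Type*} {B' : Finset α} {B : Finset β}
    {cut' mir' : α → α → Prop} {cut mir : β → β → Prop} {f' : α → ℕ} {f : β → ℕ} (ν : α → β)
    (hf' : ∀ b ∈ B', f' b = 1 + (B'.filter (cut' b)).sup fun c => (B'.filter (mir' c)).sum f')
    (hf : ∀ b ∈ B, f b = 1 + (B.filter (cut b)).sup fun c => (B.filter (mir c)).sum f)
    (hν : ∀ b ∈ B', ν b ∈ B) (hcut : ∀ b ∈ B', ∀ c ∈ B', cut' b c → cut (ν b) (ν c))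
    (hmir : ∀ c ∈ B', ∑ d ∈ B'.filter (mir' c), f (ν d) ≤ ∑ d ∈ B.filter (mir (ν c)), f d) :
    ∀ b ∈ B', f' b ≤ f (ν b) := by
  intro b hb
  induction hn : f' b using Nat.strong_induction_on generalizing b with
  | _ n ih =>
  subst hn
  rw [hf (ν b) (hν b hb)]
  refine (hf' b hb).le.trans (Nat.add_le_add_left (Finset.sup_le fun c hc => ?_) 1)
  obtain ⟨hcB, hbc⟩ := Finset.mem_filter.1 hc
  have hlt : ∀ d ∈ B'.filter (mir' c), f' d < f' b := fun d hd => by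
    have h₁ : f' d ≤ (B'.filter (mir' c)).sum f' :=
      Finset.single_le_sum (fun _ _ => Nat.zero_le _) hd
    have h₂ : (B'.filter (mir' c)).sum f' ≤ _ :=
      Finset.le_sup (f := fun c => (B'.filter (mir' c)).sum f') hc
    have h₃ := hf' b hb
    omega
  calc (B'.filter (mir' c)).sum f'
      ≤ ∑ d ∈ B'.filter (mir' c), f (ν d) :=
        Finset.sum_le_sum fun d hd => ih _ (hlt d hd) d (Finset.mem_filter.1 hd).1 rfl
    _ ≤ ∑ d ∈ B.filter (mir (ν c)), f d := hmir c hcB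
    _ ≤ _ := Finset.le_sup (f := fun c => (B.filter (mir c)).sum f)
        (Finset.mem_filter.2 ⟨hν c hcB, hcut b hb c hcB hbc⟩)

theorem mem_boundaryFinset {b : ℕ × ℕ} : b ∈ boundaryFinset U₁ U₂ ↔ Boundary U₁ U₂ b := by
  obtain ⟨i, j⟩ := b
  simp only [boundaryFinset, Finset.mem_union, Finset.mem_image, Finset.mem_range,
    Prod.mk.injEq, Boundary, word]
  constructor
  · rintro (⟨j', hj', rfl, rfl⟩ | ⟨j', hj', rfl, rfl⟩) <;> simp <;> omega
  · rintro ⟨rfl | rfl, h₁, h₂⟩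
    · exact Or.inl ⟨j - 1, by simp at h₂; omega, rfl, by omega⟩
    · exact Or.inr ⟨j - 1, by simp at h₂; omega, rfl, by omega⟩

theorem Boundary.eBoundary {b : ℕ × ℕ} (hb : Boundary U₁ U₂ b) : EBoundary U₁ U₂ b :=
  ⟨hb.1, hb.2.2⟩

theorem Boundary.eBoundary_pred {b : ℕ × ℕ} (hb : Boundary U₁ U₂ b) :
    EBoundary U₁ U₂ (b.1, b.2 - 1) :=
  ⟨hb.1, (Nat.sub_le _ _).trans hb.2.2⟩

theorem Boundary.exists_letter {b : ℕ × ℕ} (hb : Boundary U₁ U₂ b) :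
    ∃ z, letter U₁ U₂ b = some z :=
  ⟨_, List.getElem?_eq_getElem (by have := hb.2; omega)⟩

theorem prefixLen_zero (i : ℕ) : prefixLen U₁ U₂ L (i, 0) = 0 := by
  simp [prefixLen]

theorem prefixLen_succ {i j : ℕ} {a : X} (h : (word U₁ U₂ i)[j]? = some a) :
    prefixLen U₁ U₂ L (i, j + 1) = prefixLen U₁ U₂ L (i, j) + L a := by
  simp [prefixLen, List.take_add_one, h]

theorem prefixLen_of_letter {b : ℕ × ℕ} {a : X} (hb : 1 ≤ b.2) (h : letter U₁ U₂ b = some a) :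
    prefixLen U₁ U₂ L b = prefixLen U₁ U₂ L (b.1, b.2 - 1) + L a := by
  obtain ⟨i, _ | j⟩ := b
  · cases hb
  · exact prefixLen_succ h

theorem prefixLen_mono {i j k : ℕ} (hjk : j ≤ k) :
    prefixLen U₁ U₂ L (i, j) ≤ prefixLen U₁ U₂ L (i, k) :=
  ((List.take_prefix_take_left (l := word U₁ U₂ i) hjk).sublist.map L).sum_le_sum
    fun _ _ => Nat.zero_le _

theorem prefixLen_lt (hL : ∀ z, 0 < L z) {i j k : ℕ} (hjk : j < k)
    (hk : k ≤ (word U₁ U₂ i).length) :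
    prefixLen U₁ U₂ L (i, j) < prefixLen U₁ U₂ L (i, k) := by
  obtain ⟨k, rfl⟩ := Nat.exists_eq_add_of_lt hjk
  rw [prefixLen_succ (List.getElem?_eq_getElem (by omega))]
  have := prefixLen_mono (U₁ := U₁) (U₂ := U₂) (L := L) (i := i) (Nat.le_add_right j k)
  have := hL (word U₁ U₂ i)[j + k]
  omega

theorem prefixLen_pos (hL : ∀ z, 0 < L z) {b : ℕ × ℕ} (hb : Boundary U₁ U₂ b) :
    0 < prefixLen U₁ U₂ L b :=
  prefixLen_zero (U₁ := U₁) (U₂ := U₂) (L := L) b.1 ▸ prefixLen_lt hL hb.2.1 hb.2.2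

def CoherentWith (U₁ U₂ : List X) (lt : BRel) (L : X → ℕ) : Prop :=
  (∀ z, 0 < L z) ∧ ∀ a b, Boundary U₁ U₂ a → Boundary U₁ U₂ b →
    (lt a b ↔ prefixLen U₁ U₂ L a < prefixLen U₁ U₂ L b)

theorem Incomp.symm {a b : ℕ × ℕ} (h : Incomp lt a b) : Incomp lt b a := ⟨h.2, h.1⟩

namespace BoundaryOrder

theorem lt_of_index_lt (hbo : BoundaryOrder U₁ U₂ lt) {i j k : ℕ} (hjk : j < k)
    (hk : EBoundary U₁ U₂ (i, k)) : lt (i, j) (i, k) := by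
  induction k, hjk using Nat.le_induction with
  | base => exact hbo.succ i j hk
  | succ k hjk ih =>
    have hk' : EBoundary U₁ U₂ (i, k) := ⟨hk.1, Nat.le_of_succ_le hk.2⟩
    exact hbo.trans _ _ _ ⟨hk.1, by have := hk.2; simp at this ⊢; omega⟩ hk' hk (ih hk')
      (hbo.succ i k hk)

theorem lt_of_incomp_of_lt (hbo : BoundaryOrder U₁ U₂ lt) {a b c : ℕ × ℕ}
    (ha : EBoundary U₁ U₂ a) (hb : EBoundary U₁ U₂ b) (hc : EBoundary U₁ U₂ c)
    (hab : Incomp lt a b) (hbc : lt b c) : lt a c := by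
  by_contra hac
  by_cases hca : lt c a
  · exact hab.2 (hbo.trans _ _ _ hb hc ha hbc hca)
  · exact (hbo.incomp_trans _ _ _ hb ha hc hab.symm ⟨hac, hca⟩).1 hbc

theorem incomp_zero (hbo : BoundaryOrder U₁ U₂ lt) {i i' : ℕ} (hi : i = 1 ∨ i = 2)
    (hi' : i' = 1 ∨ i' = 2) : Incomp lt (i, 0) (i', 0) := by
  rcases hi with rfl | rfl <;> rcases hi' with rfl | rfl
  · exact ⟨hbo.irrefl _ ⟨Or.inl rfl, Nat.zero_le _⟩, hbo.irrefl _ ⟨Or.inl rfl, Nat.zero_le _⟩⟩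
  · exact hbo.bot
  · exact hbo.bot.symm
  · exact ⟨hbo.irrefl _ ⟨Or.inr rfl, Nat.zero_le _⟩, hbo.irrefl _ ⟨Or.inr rfl, Nat.zero_le _⟩⟩

theorem zero_lt (hbo : BoundaryOrder U₁ U₂ lt) {i : ℕ} (hi : i = 1 ∨ i = 2) {b : ℕ × ℕ}
    (hb : Boundary U₁ U₂ b) : lt (i, 0) b := by
  obtain ⟨i', j⟩ := b
  exact hbo.lt_of_incomp_of_lt (b := (i', 0)) ⟨hi, Nat.zero_le _⟩ ⟨hb.1, Nat.zero_le _⟩ hb.eBoundary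
    (hbo.incomp_zero hi hb.1) (hbo.lt_of_index_lt hb.2.1 hb.eBoundary)

theorem lt_iff_prefixLen (hbo : BoundaryOrder U₁ U₂ lt) (hL : CoherentWith U₁ U₂ lt L)
    {a b : ℕ × ℕ} (ha : EBoundary U₁ U₂ a) (hb : EBoundary U₁ U₂ b) :
    lt a b ↔ prefixLen U₁ U₂ L a < prefixLen U₁ U₂ L b := by
  obtain ⟨i, _ | j⟩ := a <;> obtain ⟨i', _ | j'⟩ := b
  · simpa [prefixLen_zero] using (hbo.incomp_zero ha.1 hb.1).1
  · have hb' : Boundary U₁ U₂ (i', j' + 1) := ⟨hb.1, by omega, hb.2⟩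
    simpa [prefixLen_zero, hbo.zero_lt ha.1 hb'] using prefixLen_pos hL.1 hb'
  · have ha' : Boundary U₁ U₂ (i, j + 1) := ⟨ha.1, by omega, ha.2⟩
    simp only [prefixLen_zero, Nat.not_lt_zero, iff_false]
    exact fun h => hbo.irrefl _ hb (hbo.trans _ _ _ hb ha hb (hbo.zero_lt hb.1 ha') h)
  · exact hL.2 _ _ ⟨ha.1, by omega, ha.2⟩ ⟨hb.1, by omega, hb.2⟩

theorem incomp_iff_prefixLen (hbo : BoundaryOrder U₁ U₂ lt) (hL : CoherentWith U₁ U₂ lt L)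
    {a b : ℕ × ℕ} (ha : EBoundary U₁ U₂ a) (hb : EBoundary U₁ U₂ b) :
    Incomp lt a b ↔ prefixLen U₁ U₂ L a = prefixLen U₁ U₂ L b := by
  rw [Incomp, hbo.lt_iff_prefixLen hL ha hb, hbo.lt_iff_prefixLen hL hb ha]
  omega

theorem mirrors_iff (hbo : BoundaryOrder U₁ U₂ lt) (hL : CoherentWith U₁ U₂ lt L)
    {a b : ℕ × ℕ} :
    Mirrors U₁ U₂ lt a b ↔ Boundary U₁ U₂ a ∧ Boundary U₁ U₂ b ∧
      letter U₁ U₂ a = letter U₁ U₂ b ∧ prefixLen U₁ U₂ L a ≠ prefixLen U₁ U₂ L b := by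
  refine ⟨fun ⟨ha, hb, hab, h⟩ => ⟨ha, hb, hab, ?_⟩,
    fun ⟨ha, hb, hab, h⟩ => ⟨ha, hb, hab, Or.inl ((hbo.incomp_iff_prefixLen hL
      ha.eBoundary hb.eBoundary).not.2 h)⟩⟩
  obtain ⟨z, hz⟩ := ha.exists_letter
  have hpa := prefixLen_of_letter (L := L) ha.2.1 hz
  have hpb := prefixLen_of_letter (L := L) hb.2.1 (hab ▸ hz)
  rw [hbo.incomp_iff_prefixLen hL ha.eBoundary hb.eBoundary,
    hbo.incomp_iff_prefixLen hL ha.eBoundary_pred hb.eBoundary_pred] at h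
  omega

theorem cuts_iff (hbo : BoundaryOrder U₁ U₂ lt) (hL : CoherentWith U₁ U₂ lt L)
    {a b : ℕ × ℕ} :
    Cuts U₁ U₂ lt a b ↔ Boundary U₁ U₂ a ∧ Boundary U₁ U₂ b ∧ a ≠ b ∧
      prefixLen U₁ U₂ L (a.1, a.2 - 1) < prefixLen U₁ U₂ L b ∧
      prefixLen U₁ U₂ L (b.1, b.2 - 1) < prefixLen U₁ U₂ L a := by
  refine ⟨fun ⟨ha, hb, hab, h₁, h₂⟩ => ⟨ha, hb, hab, ?_, ?_⟩,
    fun ⟨ha, hb, hab, h₁, h₂⟩ => ⟨ha, hb, hab, ?_, ?_⟩⟩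
  · exact (hbo.lt_iff_prefixLen hL ha.eBoundary_pred hb.eBoundary).1 h₁
  · exact (hbo.lt_iff_prefixLen hL hb.eBoundary_pred ha.eBoundary).1 h₂
  · exact (hbo.lt_iff_prefixLen hL ha.eBoundary_pred hb.eBoundary).2 h₁
  · exact (hbo.lt_iff_prefixLen hL hb.eBoundary_pred ha.eBoundary).2 h₂

theorem cuts_first (hbo : BoundaryOrder U₁ U₂ lt) {i i' : ℕ} (hi : Boundary U₁ U₂ (i, 1))
    (hi' : Boundary U₁ U₂ (i', 1)) (hii' : i ≠ i') : Cuts U₁ U₂ lt (i, 1) (i', 1) :=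
  ⟨hi, hi', by simpa using hii', hbo.zero_lt hi.1 hi', hbo.zero_lt hi'.1 hi⟩

end BoundaryOrder

theorem not_cuts_succ (hbo : BoundaryOrder U₁ U₂ lt) {b : ℕ × ℕ} :
    ¬ Cuts U₁ U₂ lt b (b.1, b.2 + 1) := fun h => hbo.irrefl b h.1.eBoundary h.2.2.2.2

theorem not_cuts_succ_left (hbo : BoundaryOrder U₁ U₂ lt) {b : ℕ × ℕ} :
    ¬ Cuts U₁ U₂ lt (b.1, b.2 + 1) b := fun h => hbo.irrefl b h.2.1.eBoundary h.2.2.2.1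

theorem IsFecundity.sum_mirrors_lt {f : ℕ × ℕ → ℕ} (hf : IsFecundity U₁ U₂ lt f)
    {b c : ℕ × ℕ} (hbc : Cuts U₁ U₂ lt b c) :
    ∑ d ∈ (boundaryFinset U₁ U₂).filter (fun d => Mirrors U₁ U₂ lt c d), f d < f b := by
  have h₁ := hf b (mem_boundaryFinset.2 hbc.1)
  have h₂ : ∑ d ∈ (boundaryFinset U₁ U₂).filter (fun d => Mirrors U₁ U₂ lt c d), f d ≤
      ((boundaryFinset U₁ U₂).filter fun c => Cuts U₁ U₂ lt b c).sup
        fun c => ((boundaryFinset U₁ U₂).filter fun d => Mirrors U₁ U₂ lt c d).sum f :=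
    Finset.le_sup
      (f := fun c => ((boundaryFinset U₁ U₂).filter fun d => Mirrors U₁ U₂ lt c d).sum f)
      (Finset.mem_filter.2 ⟨mem_boundaryFinset.2 hbc.2.1, hbc⟩)
  omega

theorem Mirrors.symm {a b : ℕ × ℕ} (h : Mirrors U₁ U₂ lt a b) : Mirrors U₁ U₂ lt b a :=
  ⟨h.2.1, h.1, h.2.2.1.symm, h.2.2.2.imp (· ∘ Incomp.symm) (· ∘ Incomp.symm)⟩

theorem mem_filter_mirrors {c d : ℕ × ℕ} :
    d ∈ (boundaryFinset U₁ U₂).filter (fun d => Mirrors U₁ U₂ lt c d) ↔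
      Mirrors U₁ U₂ lt c d := by
  simpa [mem_boundaryFinset] using fun h => h.2.1

variable [DecidableEq X]

section Expand

variable {x y : X}

@[simp] theorem expand_nil : expand x y [] = [] := rfl

@[simp] theorem expand_cons (a : X) (t : List X) :
    expand x y (a :: t) = (if a = x then [y, x] else [a]) ++ expand x y t := rfl

theorem expand_append (u v : List X) :
    expand x y (u ++ v) = expand x y u ++ expand x y v := by
  simp [expand]

theorem length_expand (w : List X) : (expand x y w).length = w.length + w.count x := by
  induction w with
  | nil => rfl
  | cons a t ih => by_cases h : a = x <;> simp [h, ih] <;> omega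

theorem count_expand (hyx : y ≠ x) (w : List X) : (expand x y w).count x = w.count x := by
  induction w with
  | nil => rfl
  | cons a t ih => by_cases h : a = x <;> simp [h, ih, hyx]

theorem getLast?_expand (w : List X) : (expand x y w).getLast? = w.getLast? := by
  rcases List.eq_nil_or_concat w with rfl | ⟨u, a, rfl⟩
  · rfl
  · by_cases h : a = x <;> simp [expand_append, h]

theorem expand_take_prefix (w : List X) (j : ℕ) : expand x y (w.take j) <+: expand x y w := by
  conv_rhs => rw [← List.take_append_drop j w, expand_append]
  exact List.prefix_append _ _

theorem take_expand_cases (w : List X) {p : ℕ} (hp : p ≤ (expand x y w).length) :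
    ∃ j, (j ≤ w.length ∧ (expand x y w).take p = expand x y (w.take j)) ∨
      (w[j]? = some x ∧ (expand x y w).take p = expand x y (w.take j) ++ [y]) := by
  induction w generalizing p with
  | nil => exact ⟨0, Or.inl ⟨le_rfl, by simp_all⟩⟩
  | cons a t ih =>
    rcases p with _ | q
    · exact ⟨0, Or.inl ⟨Nat.zero_le _, by simp⟩⟩
    by_cases ha : a = x
    · subst ha
      rcases q with _ | r
      · exact ⟨0, Or.inr ⟨rfl, by simp⟩⟩
      obtain ⟨j, hj⟩ := ih (p := r) (by simp [length_expand] at hp ⊢; omega)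
      exact ⟨j + 1, by simpa using hj⟩
    · obtain ⟨j, hj⟩ := ih (p := q) (by simp [length_expand, ha] at hp ⊢; omega)
      exact ⟨j + 1, by simpa [ha] using hj⟩

@[simp] theorem nu_fst (U₁' U₂' : List X) (b : ℕ × ℕ) : (nu U₁' U₂' x b).1 = b.1 := rfl

theorem expand_classify_of_eq (hyx : y ≠ x) {w w' : List X} {k J : ℕ} (hk : 1 ≤ k)
    (hkw : k ≤ w'.length) (hJw : J ≤ w.length) (h : y :: w'.take k = expand x y (w.take J)) :
    k - (w'.take k).count x + 1 = J ∧ 1 ≤ J ∧ J + (w.take J).count x = k + 1 ∧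
      w'[k - 1]? = w[J - 1]? := by
  have hc : (w'.take k).count x = (w.take J).count x := by
    rw [← count_expand hyx (w.take J), ← h]
    simp [hyx]
  have hl := congrArg List.length h
  rw [length_expand, List.length_take, min_eq_left hJw, List.length_cons, List.length_take,
    min_eq_left hkw] at hl
  have hJ : 1 ≤ J := Nat.pos_of_ne_zero (by rintro rfl; simp at h)
  refine ⟨by omega, hJ, hl.symm, ?_⟩
  have hlast := congrArg List.getLast? h
  rw [getLast?_expand, List.getLast?_eq_getElem?, List.getLast?_eq_getElem?] at hlast
  obtain ⟨k, rfl⟩ := Nat.exists_eq_add_of_le' hk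
  simp only [List.length_cons, List.length_take, min_eq_left hkw, min_eq_left hJw,
    Nat.add_sub_cancel, List.getElem?_cons_succ, List.getElem?_take_of_lt (Nat.lt_succ_self k),
    List.getElem?_take_of_lt (Nat.sub_lt hJ Nat.one_pos)] at hlast
  exact hlast

theorem expand_classify_of_eq_append (hyx : y ≠ x) {w w' : List X} (hw : expand x y w = y :: w')
    {k J : ℕ} (hk : 1 ≤ k) (hkw : k ≤ w'.length) (hJx : w[J]? = some x)
    (h : y :: w'.take k = expand x y (w.take J) ++ [y]) :
    k - (w'.take k).count x + 1 = J + 1 ∧ 1 ≤ J ∧ J + (w.take J).count x = k ∧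
      w'[k - 1]? = some y ∧ w'[k]? = some x := by
  have hJw : J < w.length := (List.getElem?_eq_some_iff.1 hJx).1
  have hc : (w'.take k).count x = (w.take J).count x := by
    rw [← count_expand hyx (w.take J)]
    simpa [hyx, hyx.symm] using congrArg (List.count x) h
  have hl : (expand x y (w.take J)).length = k := by
    simpa [min_eq_left hkw] using (congrArg List.length h).symm
  have hl' := hl
  rw [length_expand, List.length_take, min_eq_left hJw.le] at hl'
  have hJ : 1 ≤ J := Nat.pos_of_ne_zero (by rintro rfl; simp at hl'; omega)
  refine ⟨by omega, hJ, hl', ?_, ?_⟩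
  · have := congrArg (·[k]?) h
    obtain ⟨k, rfl⟩ := Nat.exists_eq_add_of_le' hk
    simpa [List.getElem?_append_right, hl] using this
  · obtain ⟨t, ht⟩ := expand_take_prefix (x := x) (y := y) w (J + 1)
    have := congrArg (·[k + 1]?) ht
    simp only [hw, List.take_add_one, hJx, Option.toList_some, expand_append] at this
    simpa [List.getElem?_append_right, hl, hJx] using this.symm

/-- Here `j = ν(k)`: the prefix `y :: w'.take k` of `T(w)` is either `T(w.take j)`, or
`T(w.take (j - 1)) ++ [y]` with `w[j - 1] = x`. -/
theorem expand_classify (hyx : y ≠ x) {w w' : List X} (hw : expand x y w = y :: w') {k j : ℕ}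
    (hk : 1 ≤ k) (hkw : k ≤ w'.length) (hj : j = k - (w'.take k).count x + 1) :
    1 ≤ j ∧ j ≤ w.length ∧ j - 1 + (w.take (j - 1)).count x ≤ k ∧
      ((j + (w.take j).count x = k + 1 ∧ w'[k - 1]? = w[j - 1]?) ∨
        (j + (w.take j).count x = k + 2 ∧ 2 ≤ j ∧ w[j - 1]? = some x ∧
          w'[k - 1]? = some y ∧ w'[k]? = some x)) := by
  obtain ⟨J, ⟨hJw, h⟩ | ⟨hJx, h⟩⟩ :=
    take_expand_cases w (p := k + 1) (by rw [hw]; simp; omega)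
  all_goals rw [hw, List.take_succ_cons] at h
  · obtain ⟨hjJ, hJ, hl, hlet⟩ := expand_classify_of_eq hyx hk hkw hJw h
    obtain rfl : j = J := hj.trans hjJ
    have := (List.take_prefix_take_left (l := w) (Nat.sub_le j 1)).count_le x
    exact ⟨hJ, hJw, by omega, Or.inl ⟨hl, hlet⟩⟩
  · obtain ⟨hjJ, hJ, hl, hy, hx⟩ := expand_classify_of_eq_append hyx hw hk hkw hJx h
    obtain rfl : j = J + 1 := hj.trans hjJ
    have hc : (w.take (J + 1)).count x = (w.take J).count x + 1 := by
      simp [List.take_add_one, hJx]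
    exact ⟨by omega, (List.getElem?_eq_some_iff.1 hJx).1, by simp; omega,
      Or.inr ⟨by omega, by omega, by simpa using hJx, hy, hx⟩⟩

theorem count_take_pred_of_expand (hyx : y ≠ x) {w w' : List X} (hw : expand x y w = y :: w')
    {j : ℕ} (hj : 1 ≤ j) (hjw : j ≤ w.length) :
    (w'.take (j + (w.take j).count x - 1)).count x = (w.take j).count x := by
  have h := List.prefix_iff_eq_take.1 (expand_take_prefix (x := x) (y := y) w j)
  rw [length_expand, List.length_take, min_eq_left hjw, hw] at h
  obtain ⟨n, hn⟩ : ∃ n, j + (w.take j).count x = n + 1 :=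
    ⟨_, (Nat.succ_pred_eq_of_pos (by omega)).symm⟩
  rw [hn, List.take_succ_cons] at h
  rw [hn, Nat.add_sub_cancel, ← count_expand hyx (w.take j), h]
  simp [hyx]

theorem add_count_take_le_of_expand {w w' : List X} (hw : expand x y w = y :: w')
    {j : ℕ} (hjw : j ≤ w.length) : j + (w.take j).count x ≤ w'.length + 1 := by
  have h := congrArg List.length hw
  rw [length_expand] at h
  have := (List.take_prefix j w).count_le x
  simp at h
  omega

end Expand

structure CaseII (U₁ U₂ : List X) (lt : BRel) (L : X → ℕ) (U₁' U₂' : List X)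
    (lt' : BRel) (L' : X → ℕ) (x y : X) : Prop where
  bo : BoundaryOrder U₁ U₂ lt
  coh : CoherentWith U₁ U₂ lt L
  nielsen : NielsenIIxy U₁ U₂ lt U₁' U₂' lt' x y
  coh' : CoherentWith U₁' U₂' lt' L'

namespace CaseII

variable {U₁' U₂' : List X} {lt' : BRel} {L' : X → ℕ} {x y : X}
  {b c : ℕ × ℕ} (S : CaseII U₁ U₂ lt L U₁' U₂' lt' L' x y)
include S

theorem bo' : BoundaryOrder U₁' U₂' lt' := by
  obtain ⟨-, -, -, -, -, hbo', -⟩ := S.nielsen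
  exact hbo'

theorem letter_one_one : letter U₁ U₂ (1, 1) = some x := by
  simpa [letter, word, List.head?_eq_getElem?] using S.nielsen.1

theorem letter_two_one : letter U₁ U₂ (2, 1) = some y := by
  simpa [letter, word, List.head?_eq_getElem?] using S.nielsen.2.1

theorem boundary_one_one : Boundary U₁ U₂ (1, 1) :=
  ⟨Or.inl rfl, le_rfl, (List.getElem?_eq_some_iff.1 S.letter_one_one).1⟩

theorem boundary_two_one : Boundary U₁ U₂ (2, 1) :=
  ⟨Or.inr rfl, le_rfl, (List.getElem?_eq_some_iff.1 S.letter_two_one).1⟩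

theorem prefixLen_one_one : prefixLen U₁ U₂ L (1, 1) = L x := by
  simpa [prefixLen_zero] using prefixLen_of_letter (L := L) le_rfl S.letter_one_one

theorem prefixLen_two_one : prefixLen U₁ U₂ L (2, 1) = L y := by
  simpa [prefixLen_zero] using prefixLen_of_letter (L := L) le_rfl S.letter_two_one

theorem L_y_lt_L_x : L y < L x := by
  obtain ⟨-, -, hlt, -⟩ := S.nielsen
  simpa [S.prefixLen_one_one, S.prefixLen_two_one] using
    (S.coh.2 _ _ S.boundary_two_one S.boundary_one_one).1 hlt

theorem y_ne_x : y ≠ x := fun h => (h ▸ S.L_y_lt_L_x).false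

theorem count_take_one_one : ((word U₁ U₂ 1).take 1).count x = 1 := by
  have h : (word U₁ U₂ 1)[0]? = some x := S.letter_one_one
  simp [List.take_one, List.head?_eq_getElem?, h]

theorem count_take_two_one : ((word U₁ U₂ 2).take 1).count x = 0 := by
  have h : (word U₁ U₂ 2)[0]? = some y := S.letter_two_one
  simp [List.take_one, List.head?_eq_getElem?, h, S.y_ne_x]

theorem expand_word {i : ℕ} (hi : i = 1 ∨ i = 2) :
    expand x y (word U₁ U₂ i) = y :: word U₁' U₂' i := by
  obtain ⟨-, -, -, h₁, h₂, -⟩ := S.nielsen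
  rcases hi with rfl | rfl
  · obtain ⟨t, ht⟩ := List.head?_eq_some_iff.1 S.nielsen.1
    simp [word, h₁, ht]
  · obtain ⟨t, ht⟩ := List.head?_eq_some_iff.1 S.nielsen.2.1
    simp [word, h₂, ht, S.y_ne_x]

theorem nu_classify (hb : Boundary U₁' U₂' b) :
    let j := (nu U₁' U₂' x b).2
    let w := word U₁ U₂ b.1
    let w' := word U₁' U₂' b.1
    1 ≤ j ∧ j ≤ w.length ∧ j - 1 + (w.take (j - 1)).count x ≤ b.2 ∧
      ((j + (w.take j).count x = b.2 + 1 ∧ w'[b.2 - 1]? = w[j - 1]?) ∨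
        (j + (w.take j).count x = b.2 + 2 ∧ 2 ≤ j ∧ w[j - 1]? = some x ∧
          w'[b.2 - 1]? = some y ∧ w'[b.2]? = some x)) :=
  expand_classify S.y_ne_x (S.expand_word hb.1) hb.2.1 hb.2.2 rfl

theorem nu_mem (hb : Boundary U₁' U₂' b) : Bminus U₁ U₂ (nu U₁' U₂' x b) := by
  obtain ⟨hj, hjw, -, hcases⟩ := S.nu_classify hb
  refine ⟨⟨hb.1, hj, hjw⟩, fun h => ?_⟩
  have hi : b.1 = 2 := congrArg Prod.fst h
  have hj1 : (nu U₁' U₂' x b).2 = 1 := congrArg Prod.snd h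
  rcases hcases with ⟨hA, -⟩ | ⟨-, h2, -⟩
  · rw [hj1, hi, S.count_take_two_one] at hA
    have := hb.2.1
    omega
  · omega

theorem nu_mu (hb : Boundary U₁ U₂ b) : nu U₁' U₂' x (mu U₁ U₂ x b) = b := by
  obtain ⟨i, j⟩ := b
  have h := count_take_pred_of_expand S.y_ne_x (S.expand_word hb.1) hb.2.1 hb.2.2
  simp only [nu, mu] at h ⊢
  rw [h]
  have := hb.2.1
  ext <;> simp; omega

theorem mu_mem (hb : Bminus U₁ U₂ b) : Boundary U₁' U₂' (mu U₁ U₂ x b) := by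
  obtain ⟨⟨hi, hj, hjw⟩, hne⟩ := hb
  refine ⟨hi, ?_, ?_⟩
  · rcases Nat.lt_or_ge 1 b.2 with h | h
    · simp only [mu]; omega
    · obtain ⟨i, j⟩ := b
      obtain rfl : j = 1 := by simp at hj h; omega
      obtain rfl : i = 1 := by rcases hi with rfl | rfl <;> simp_all
      simp [mu, S.count_take_one_one]
  · have := add_count_take_le_of_expand (S.expand_word hi) hjw
    simp only [mu]
    omega

theorem mu_nu_of_bpminus (hm : Bpminus U₁ U₂ x b) : mu U₁ U₂ x (nu U₁' U₂' x b) = b := by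
  obtain ⟨b₀, hb₀, rfl⟩ := hm
  rw [S.nu_mu hb₀.1]

theorem bpminus_of_mu_nu (hb : Boundary U₁' U₂' b) (h : mu U₁ U₂ x (nu U₁' U₂' x b) = b) :
    Bpminus U₁ U₂ x b :=
  ⟨_, S.nu_mem hb, h⟩

theorem letter_of_bpminus (hb : Boundary U₁' U₂' b) (hm : Bpminus U₁ U₂ x b) :
    letter U₁' U₂' b = letter U₁ U₂ (nu U₁' U₂' x b) := by
  have hmu := congrArg Prod.snd (S.mu_nu_of_bpminus hm)
  obtain ⟨-, -, -, ⟨-, hlet⟩ | ⟨hB, -⟩⟩ := S.nu_classify hb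
  · exact hlet
  · simp only [mu, nu_fst] at hmu hB
    omega

/-- A new boundary outside `B'⁻` lies between the `y` and the `x` of an expanded `x`. -/
theorem not_bpminus_spec (hb : Boundary U₁' U₂' b) (hm : ¬ Bpminus U₁ U₂ x b) :
    mu U₁ U₂ x (nu U₁' U₂' x b) = (b.1, b.2 + 1) ∧ letter U₁' U₂' b = some y ∧
      letter U₁ U₂ (nu U₁' U₂' x b) = some x ∧ letter U₁' U₂' (b.1, b.2 + 1) = some x ∧
      2 ≤ (nu U₁' U₂' x b).2 := by
  obtain ⟨-, -, -, ⟨hA, -⟩ | ⟨hB, h2, hx, hy, hx'⟩⟩ := S.nu_classify hb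
  · refine absurd (S.bpminus_of_mu_nu hb ?_) hm
    ext
    · rfl
    · simp only [mu, nu_fst] at hA ⊢; omega
  · refine ⟨?_, hy, hx, hx', h2⟩
    ext
    · rfl
    · simp only [mu, nu_fst] at hB ⊢; omega

theorem L_y_lt_prefixLen (hb : Bminus U₁ U₂ b) : L y < prefixLen U₁ U₂ L b := by
  obtain ⟨⟨hi, hj, hjw⟩, hne⟩ := hb
  obtain ⟨i, j⟩ := b
  rcases hi with rfl | rfl
  · have := prefixLen_mono (U₁ := U₁) (U₂ := U₂) (L := L) (i := 1) hj
    rw [S.prefixLen_one_one] at this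
    exact S.L_y_lt_L_x.trans_le this
  · have := prefixLen_lt (U₁ := U₁) (U₂ := U₂) S.coh.1 (i := 2)
      (show 1 < j by simp at hj hne; omega) hjw
    rwa [S.prefixLen_two_one] at this

theorem L_x_lt_prefixLen_nu (hb : Boundary U₁' U₂' b) (hm : ¬ Bpminus U₁ U₂ x b) :
    L x < prefixLen U₁ U₂ L (nu U₁' U₂' x b) := by
  obtain ⟨-, -, hx, -, h2⟩ := S.not_bpminus_spec hb hm
  have hν := (S.nu_mem hb).1
  rw [prefixLen_of_letter hν.2.1 hx]
  have := prefixLen_pos (U₁ := U₁) (U₂ := U₂) S.coh.1 (b := (b.1, (nu U₁' U₂' x b).2 - 1))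
    ⟨hb.1, by omega, by have := hν.2.2; simp at this ⊢; omega⟩
  simp only [nu_fst] at this ⊢
  omega

theorem prefixLen_lt_iff_of_bpminus (hb : Boundary U₁' U₂' b) (hc : Boundary U₁' U₂' c)
    (hbm : Bpminus U₁ U₂ x b) (hcm : Bpminus U₁ U₂ x c) :
    prefixLen U₁' U₂' L' b < prefixLen U₁' U₂' L' c ↔
      prefixLen U₁ U₂ L (nu U₁' U₂' x b) < prefixLen U₁ U₂ L (nu U₁' U₂' x c) := by
  obtain ⟨-, -, -, -, -, -, hmatch⟩ := S.nielsen
  exact ((S.coh'.2 b c hb hc).symm.trans (hmatch b c hbm hcm)).trans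
    (S.coh.2 _ _ (S.nu_mem hb).1 (S.nu_mem hc).1)

theorem exists_bpminus_le (hb : Boundary U₁' U₂' b) :
    ∃ m, Boundary U₁' U₂' m ∧ Bpminus U₁ U₂ x m ∧ nu U₁' U₂' x m = nu U₁' U₂' x b ∧
      prefixLen U₁' U₂' L' b ≤ prefixLen U₁' U₂' L' m := by
  refine ⟨_, S.mu_mem (S.nu_mem hb), ⟨_, S.nu_mem hb, rfl⟩, S.nu_mu (S.nu_mem hb).1, ?_⟩
  by_cases hm : Bpminus U₁ U₂ x b
  · rw [S.mu_nu_of_bpminus hm]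
  · rw [(S.not_bpminus_spec hb hm).1]
    exact prefixLen_mono (Nat.le_succ _)

theorem prefixLen_pred_nu_lt (hb : Boundary U₁' U₂' b) (hc : Boundary U₁' U₂' c)
    (h : prefixLen U₁' U₂' L' (b.1, b.2 - 1) < prefixLen U₁' U₂' L' c) :
    prefixLen U₁ U₂ L ((nu U₁' U₂' x b).1, (nu U₁' U₂' x b).2 - 1) <
      prefixLen U₁ U₂ L (nu U₁' U₂' x c) := by
  obtain ⟨hj, hjw, hpred, -⟩ := S.nu_classify hb
  set e := ((nu U₁' U₂' x b).1, (nu U₁' U₂' x b).2 - 1)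
  -- `e` is either `ν (μ e)` with `μ e` not after `(b.1, b.2 - 1)`, or `(1,0)` or `(2,1)`.
  by_cases he : Bminus U₁ U₂ e
  · obtain ⟨m, hm, hmm, hνm, hcm⟩ := S.exists_bpminus_le hc
    have hQ : prefixLen U₁' U₂' L' (mu U₁ U₂ x e) < prefixLen U₁' U₂' L' m :=
      ((prefixLen_mono (i := b.1) (by simp only [e, nu_fst]; omega)).trans_lt h).trans_le hcm
    have := (S.prefixLen_lt_iff_of_bpminus (S.mu_mem he) hm ⟨_, he, rfl⟩ hmm).1 hQ
    rwa [S.nu_mu he.1, hνm] at this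
  · refine lt_of_le_of_lt ?_ (S.L_y_lt_prefixLen (S.nu_mem hc))
    rcases Nat.eq_zero_or_pos e.2 with h0 | h0
    · rw [show e = (e.1, 0) from Prod.ext rfl h0, prefixLen_zero]
      exact Nat.zero_le _
    · have : e = (2, 1) :=
        not_not.1 fun hne => he ⟨⟨hb.1, h0, by simp only [e, nu_fst]; omega⟩, hne⟩
      rw [this, S.prefixLen_two_one]

theorem mu_nu_eq_or (hb : Boundary U₁' U₂' b) :
    mu U₁ U₂ x (nu U₁' U₂' x b) = b ∨ mu U₁ U₂ x (nu U₁' U₂' x b) = (b.1, b.2 + 1) := by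
  by_cases hm : Bpminus U₁ U₂ x b
  · exact Or.inl (S.mu_nu_of_bpminus hm)
  · exact Or.inr (S.not_bpminus_spec hb hm).1

theorem cuts_nu (h : Cuts U₁' U₂' lt' b c) :
    Cuts U₁ U₂ lt (nu U₁' U₂' x b) (nu U₁' U₂' x c) := by
  obtain ⟨hb, hc, hne, h₁, h₂⟩ := (S.bo'.cuts_iff S.coh').1 h
  refine (S.bo.cuts_iff S.coh).2 ⟨(S.nu_mem hb).1, (S.nu_mem hc).1, fun heq => ?_,
    S.prefixLen_pred_nu_lt hb hc h₁, S.prefixLen_pred_nu_lt hc hb h₂⟩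
  have hμ := congrArg (mu U₁ U₂ x) heq
  rcases S.mu_nu_eq_or hb with hb' | hb' <;> rcases S.mu_nu_eq_or hc with hc' | hc' <;>
    rw [hb', hc'] at hμ
  · exact hne hμ
  · exact not_cuts_succ_left S.bo' (hμ ▸ h)
  · exact not_cuts_succ S.bo' (hμ ▸ h)
  · obtain ⟨h₁, h₂⟩ := Prod.mk.inj hμ
    exact hne (Prod.ext h₁ (by omega))

theorem mirrors_nu_of_bpminus (hbm : Bpminus U₁ U₂ x b) (hcm : Bpminus U₁ U₂ x c)
    (h : Mirrors U₁' U₂' lt' b c) : Mirrors U₁ U₂ lt (nu U₁' U₂' x b) (nu U₁' U₂' x c) := by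
  obtain ⟨hb, hc, hlet, hne⟩ := (S.bo'.mirrors_iff S.coh').1 h
  refine (S.bo.mirrors_iff S.coh).2 ⟨(S.nu_mem hb).1, (S.nu_mem hc).1, ?_, fun heq => hne ?_⟩
  · rw [← S.letter_of_bpminus hb hbm, ← S.letter_of_bpminus hc hcm, hlet]
  · have h₁ := S.prefixLen_lt_iff_of_bpminus hb hc hbm hcm
    have h₂ := S.prefixLen_lt_iff_of_bpminus hc hb hcm hbm
    omega

theorem succ_of_not_bpminus (hb : Boundary U₁' U₂' b) (hm : ¬ Bpminus U₁ U₂ x b) :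
    Boundary U₁' U₂' (b.1, b.2 + 1) ∧ Bpminus U₁ U₂ x (b.1, b.2 + 1) ∧
      nu U₁' U₂' x (b.1, b.2 + 1) = nu U₁' U₂' x b ∧
      prefixLen U₁' U₂' L' (b.1, b.2 + 1) = prefixLen U₁' U₂' L' b + L' x := by
  obtain ⟨hμ, -, -, hx, -⟩ := S.not_bpminus_spec hb hm
  refine ⟨hμ ▸ S.mu_mem (S.nu_mem hb), ⟨_, S.nu_mem hb, hμ⟩,
    hμ ▸ S.nu_mu (S.nu_mem hb).1, ?_⟩
  exact prefixLen_of_letter (Nat.le_add_left 1 _) hx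

theorem mirrors_nu_of_not_bpminus (hbm : ¬ Bpminus U₁ U₂ x b) (hcm : ¬ Bpminus U₁ U₂ x c)
    (h : Mirrors U₁' U₂' lt' b c) : Mirrors U₁ U₂ lt (nu U₁' U₂' x b) (nu U₁' U₂' x c) := by
  obtain ⟨hb, hc, -, hne⟩ := (S.bo'.mirrors_iff S.coh').1 h
  obtain ⟨hb₁, hbm₁, hνb, hQb⟩ := S.succ_of_not_bpminus hb hbm
  obtain ⟨hc₁, hcm₁, hνc, hQc⟩ := S.succ_of_not_bpminus hc hcm
  refine (S.bo.mirrors_iff S.coh).2 ⟨(S.nu_mem hb).1, (S.nu_mem hc).1, ?_, fun heq => hne ?_⟩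
  · rw [(S.not_bpminus_spec hb hbm).2.2.1, (S.not_bpminus_spec hc hcm).2.2.1]
  · have h₁ := S.prefixLen_lt_iff_of_bpminus hb₁ hc₁ hbm₁ hcm₁
    have h₂ := S.prefixLen_lt_iff_of_bpminus hc₁ hb₁ hcm₁ hbm₁
    rw [hνb, hνc] at h₁ h₂
    omega

theorem eq_of_nu_eq (hb : Boundary U₁' U₂' b) (hc : Boundary U₁' U₂' c)
    (hbc : Bpminus U₁ U₂ x b ↔ Bpminus U₁ U₂ x c) (h : nu U₁' U₂' x b = nu U₁' U₂' x c) :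
    b = c := by
  by_cases hbm : Bpminus U₁ U₂ x b
  · rw [← S.mu_nu_of_bpminus hbm, ← S.mu_nu_of_bpminus (hbc.1 hbm), h]
  · have hb' := (S.not_bpminus_spec hb hbm).1
    have hc' := (S.not_bpminus_spec hc (hbc.not.1 hbm)).1
    rw [h, hc'] at hb'
    obtain ⟨h₁, h₂⟩ := Prod.mk.inj hb'
    exact Prod.ext h₁.symm (by omega)

theorem mirrors_one_one_nu (hd : Boundary U₁' U₂' b) (hdm : ¬ Bpminus U₁ U₂ x b) :
    Mirrors U₁ U₂ lt (1, 1) (nu U₁' U₂' x b) :=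
  (S.bo.mirrors_iff S.coh).2 ⟨S.boundary_one_one, (S.nu_mem hd).1,
    by rw [S.letter_one_one, (S.not_bpminus_spec hd hdm).2.2.1],
    by rw [S.prefixLen_one_one]; exact (S.L_x_lt_prefixLen_nu hd hdm).ne⟩

theorem mirrors_two_one_nu (hd : Boundary U₁' U₂' b) (hy : letter U₁ U₂ (nu U₁' U₂' x b) = some y) :
    Mirrors U₁ U₂ lt (2, 1) (nu U₁' U₂' x b) :=
  (S.bo.mirrors_iff S.coh).2 ⟨S.boundary_two_one, (S.nu_mem hd).1,
    by rw [S.letter_two_one, hy],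
    by rw [S.prefixLen_two_one]; exact (S.L_y_lt_prefixLen (S.nu_mem hd)).ne⟩

theorem sum_mirrors_le_of_bpminus {f : ℕ × ℕ → ℕ} (hf : IsFecundity U₁ U₂ lt f)
    (hc : Boundary U₁' U₂' c) (hcm : Bpminus U₁ U₂ x c) :
    ∑ d ∈ (boundaryFinset U₁' U₂').filter (fun d => Mirrors U₁' U₂' lt' c d),
        f (nu U₁' U₂' x d) ≤
      ∑ d ∈ (boundaryFinset U₁ U₂).filter (fun d => Mirrors U₁ U₂ lt (nu U₁' U₂' x c) d),
        f d := by
  have hmem : ∀ d ∈ (boundaryFinset U₁' U₂').filter (fun d => Mirrors U₁' U₂' lt' c d),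
      Boundary U₁' U₂' d ∧ letter U₁' U₂' c = letter U₁' U₂' d := fun d hd =>
    ((S.bo'.mirrors_iff S.coh').1 (mem_filter_mirrors.1 hd)).2.imp_right And.left
  refine Finset.sum_comp_le_of_injOn_filter f (Bpminus U₁ U₂ x) (b := (2, 1))
    (u := (boundaryFinset U₁ U₂).filter (fun d => Mirrors U₁ U₂ lt (1, 1) d))
    (fun d hd d' hd' => ?_) (fun d hd => ?_) (fun d hd d' hd' => ?_) (fun d hd => ?_)
    (fun ⟨d, hd⟩ => ?_)
    (hf.sum_mirrors_lt (S.bo.cuts_first S.boundary_two_one S.boundary_one_one (by decide))).le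
  all_goals obtain ⟨hd₁, hd₂⟩ := Finset.mem_filter.1 (Finset.mem_coe.1 hd)
  · obtain ⟨hd'₁, hd'₂⟩ := Finset.mem_filter.1 (Finset.mem_coe.1 hd')
    exact S.eq_of_nu_eq (hmem d hd₁).1 (hmem d' hd'₁).1 (iff_of_true hd₂ hd'₂)
  · exact Finset.mem_erase.2 ⟨(S.nu_mem (hmem d hd₁).1).2, mem_filter_mirrors.2
      (S.mirrors_nu_of_bpminus hcm hd₂ (mem_filter_mirrors.1 hd₁))⟩
  · obtain ⟨hd'₁, hd'₂⟩ := Finset.mem_filter.1 (Finset.mem_coe.1 hd')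
    exact S.eq_of_nu_eq (hmem d hd₁).1 (hmem d' hd'₁).1 (iff_of_false hd₂ hd'₂)
  · exact mem_filter_mirrors.2 (S.mirrors_one_one_nu (hmem d hd₁).1 hd₂)
  · obtain ⟨hd', hlet⟩ := hmem d hd₁
    refine mem_filter_mirrors.2 (S.mirrors_two_one_nu hc ?_).symm
    rw [← S.letter_of_bpminus hc hcm, hlet, (S.not_bpminus_spec hd' hd₂).2.1]

theorem sum_mirrors_le_of_not_bpminus {f : ℕ × ℕ → ℕ} (hf : IsFecundity U₁ U₂ lt f)
    (hc : Boundary U₁' U₂' c) (hcm : ¬ Bpminus U₁ U₂ x c) :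
    ∑ d ∈ (boundaryFinset U₁' U₂').filter (fun d => Mirrors U₁' U₂' lt' c d),
        f (nu U₁' U₂' x d) ≤
      ∑ d ∈ (boundaryFinset U₁ U₂).filter (fun d => Mirrors U₁ U₂ lt (nu U₁' U₂' x c) d),
        f d := by
  have hmem : ∀ d ∈ (boundaryFinset U₁' U₂').filter (fun d => Mirrors U₁' U₂' lt' c d),
      Boundary U₁' U₂' d ∧ letter U₁' U₂' c = letter U₁' U₂' d := fun d hd =>
    ((S.bo'.mirrors_iff S.coh').1 (mem_filter_mirrors.1 hd)).2.imp_right And.left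
  refine Finset.sum_comp_le_of_injOn_filter f (¬ Bpminus U₁ U₂ x ·) (b := (1, 1))
    (u := (boundaryFinset U₁ U₂).filter (fun d => Mirrors U₁ U₂ lt (2, 1) d))
    (fun d hd d' hd' => ?_) (fun d hd => ?_) (fun d hd d' hd' => ?_) (fun d hd => ?_)
    (fun _ => mem_filter_mirrors.2 (S.mirrors_one_one_nu hc hcm).symm)
    (hf.sum_mirrors_lt (S.bo.cuts_first S.boundary_one_one S.boundary_two_one (by decide))).le
  all_goals obtain ⟨hd₁, hd₂⟩ := Finset.mem_filter.1 (Finset.mem_coe.1 hd)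
  · obtain ⟨hd'₁, hd'₂⟩ := Finset.mem_filter.1 (Finset.mem_coe.1 hd')
    exact S.eq_of_nu_eq (hmem d hd₁).1 (hmem d' hd'₁).1 (iff_of_false hd₂ hd'₂)
  · refine Finset.mem_erase.2 ⟨fun h => ?_, mem_filter_mirrors.2
      (S.mirrors_nu_of_not_bpminus hcm hd₂ (mem_filter_mirrors.1 hd₁))⟩
    have := S.L_x_lt_prefixLen_nu (hmem d hd₁).1 hd₂
    rw [h, S.prefixLen_one_one] at this
    exact this.false
  · obtain ⟨hd'₁, hd'₂⟩ := Finset.mem_filter.1 (Finset.mem_coe.1 hd')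
    exact S.eq_of_nu_eq (hmem d hd₁).1 (hmem d' hd'₁).1
      (iff_of_true (not_not.1 hd₂) (not_not.1 hd'₂))
  · obtain ⟨hd', hlet⟩ := hmem d hd₁
    refine mem_filter_mirrors.2 (S.mirrors_two_one_nu hd' ?_)
    rw [← S.letter_of_bpminus hd' (not_not.1 hd₂), ← hlet, (S.not_bpminus_spec hc hcm).2.1]

theorem sum_mirrors_le {f : ℕ × ℕ → ℕ} (hf : IsFecundity U₁ U₂ lt f) (hc : Boundary U₁' U₂' c) :
    ∑ d ∈ (boundaryFinset U₁' U₂').filter (fun d => Mirrors U₁' U₂' lt' c d),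
        f (nu U₁' U₂' x d) ≤
      ∑ d ∈ (boundaryFinset U₁ U₂).filter (fun d => Mirrors U₁ U₂ lt (nu U₁' U₂' x c) d),
        f d := by
  by_cases hcm : Bpminus U₁ U₂ x c
  · exact S.sum_mirrors_le_of_bpminus hf hc hcm
  · exact S.sum_mirrors_le_of_not_bpminus hf hc hcm

end CaseII

theorem fecundity_le_caseII_general (U₁ U₂ U₁' U₂' : List X) (lt lt' : BRel) (x y : X)
    (hbo : BoundaryOrder U₁ U₂ lt)
    (hcoh : Coherent U₁ U₂ lt)
    (hII : NielsenIIxy U₁ U₂ lt U₁' U₂' lt' x y) (hcoh' : Coherent U₁' U₂' lt')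
    (f f' : ℕ × ℕ → ℕ)
    (hf : IsFecundity U₁ U₂ lt f) (hf' : IsFecundity U₁' U₂' lt' f') :
    ∀ b, Boundary U₁' U₂' b → f' b ≤ f (nu U₁' U₂' x b) := by
  obtain ⟨L, hL⟩ := hcoh
  obtain ⟨L', hL'⟩ := hcoh'
  have S : CaseII U₁ U₂ lt L U₁' U₂' lt' L' x y := ⟨hbo, hL, hII, hL'⟩
  intro b hb
  refine fecundity_le_comp_of_simulation (nu U₁' U₂' x) hf' hf
    (fun b hb => mem_boundaryFinset.2 (S.nu_mem (mem_boundaryFinset.1 hb)).1)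
    (fun b _ c _ h => S.cuts_nu h) (fun c hc => S.sum_mirrors_le hf (mem_boundaryFinset.1 hc))
    b (mem_boundaryFinset.2 hb)

/-- **Lemma.** After a case II coherent extended Nielsen transformation of an
extended word equation with acyclic cut graph, the fecundity of every new boundary
`(i,j)` is at most the fecundity of the old boundary `(i,ν(i,j))`. -/
theorem fecundity_le_caseII (U₁ U₂ U₁' U₂' : List X) (lt lt' : BRel) (x y : X)
    (h₁ : U₁ ≠ []) (h₂ : U₂ ≠ []) (hbo : BoundaryOrder U₁ U₂ lt)
    (hcoh : Coherent U₁ U₂ lt)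
    (hII : NielsenIIxy U₁ U₂ lt U₁' U₂' lt' x y) (hcoh' : Coherent U₁' U₂' lt')
    (hacyc : Acyclic U₁ U₂ lt)
    (f f' : ℕ × ℕ → ℕ)
    (hf : IsFecundity U₁ U₂ lt f) (hf' : IsFecundity U₁' U₂' lt' f') :
    ∀ b, Boundary U₁' U₂' b → f' b ≤ f (nu U₁' U₂' x b) :=
  fecundity_le_caseII_general U₁ U₂ U₁' U₂' lt lt' x y hbo hcoh hII hcoh' f f' hf hf'

end ExtWordEq
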